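/- Let E ⊆ ℝⁿ be permutation invariant, φ : ℝⁿ → ℝ permutation invariant with φ > 0 on E, and h : ℝⁿ → ℝ with h ≥ 0 on E. If a maximizes the product h·φ over E and d is an E-subgradient of h at a, and h(a) > 0, then ⟨a, d⟩ = ⟨a↓, d↓⟩. -/
import Mathlib


open Finset

/-- Decreasing rearrangement of a vector in ℝⁿ. -/
noncomputable def dsort {n : ℕ} (v : Fin n → ℝ) : Fin n → ℝ :=
  fun i => - ((fun j => - v j) ∘ Tuple.sort (fun j => - v j)) i

lemma dsort_apply {n : ℕ} (v : Fin n → ℝ) (i : Fin n) :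
    dsort v i = v (Tuple.sort (fun j => - v j) i) := by
  simp [dsort]

lemma dsort_antitone {n : ℕ} (v : Fin n → ℝ) : Antitone (dsort v) := by
  intro i j hij
  have := Tuple.monotone_sort (fun j => - v j) hij
  simp only [Function.comp] at this
  simp only [dsort, Function.comp]
  linarith

lemma antitone_monovary {n : ℕ} {f g : Fin n → ℝ} (hf : Antitone f) (hg : Antitone g) :
    Monovary f g := by
  intro i j hgij
  have hji : j ≤ i := by
    by_contra hc
    exact absurd (hg (le_of_not_ge hc)) (not_le.2 hgij)
  exact hf hji

theorem stmt17 {n : ℕ} (E : Set (Fin n → ℝ)) (hE : E.Nonempty)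
    (hinv : ∀ x ∈ E, ∀ σ : Equiv.Perm (Fin n), (fun i => x (σ i)) ∈ E)
    (φ h : (Fin n → ℝ) → ℝ)
    (hφinv : ∀ x, ∀ σ : Equiv.Perm (Fin n), φ (fun i => x (σ i)) = φ x)
    (hφpos : ∀ x ∈ E, 0 < φ x) (hhnn : ∀ x ∈ E, 0 ≤ h x)
    (a : Fin n → ℝ) (ha : a ∈ E) (hha : 0 < h a)
    (hmax : ∀ x ∈ E, h x * φ x ≤ h a * φ a)
    (d : Fin n → ℝ)
    (hd : ∀ x ∈ E, h x - h a ≥ ∑ i, d i * (x i - a i)) :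
    ∑ i, a i * d i = ∑ i, dsort a i * dsort d i := by
  have key : ∀ σ : Equiv.Perm (Fin n), ∑ i, d i * a (σ i) ≤ ∑ i, d i * a i := by
    intro σ
    have hxE := hinv a ha σ
    have hφ := hφinv a σ
    have hle : h (fun i => a (σ i)) ≤ h a := by
      have hm := hmax _ hxE
      rw [hφ] at hm
      exact le_of_mul_le_mul_right hm (hφpos a ha)
    have hsub := hd _ hxE
    have h0 : ∑ i, d i * (a (σ i) - a i) ≤ 0 := le_trans hsub (by linarith)
    have hexp : ∑ i, d i * (a (σ i) - a i) = ∑ i, d i * a (σ i) - ∑ i, d i * a i := by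
      rw [← Finset.sum_sub_distrib]
      exact Finset.sum_congr rfl fun i _ => by ring
    linarith [hexp ▸ h0]
  set σa := Tuple.sort (fun j => - a j) with hσa
  set σd := Tuple.sort (fun j => - d j) with hσd
  have hda : ∀ i, dsort a i = a (σa i) := fun i => dsort_apply a i
  have hdd : ∀ i, dsort d i = d (σd i) := fun i => dsort_apply d i
  have mono : Monovary (dsort a) (dsort d) :=
    antitone_monovary (dsort_antitone a) (dsort_antitone d)
  -- rewrite RHS as ∑ d i * a (τ i) for τ = σd.symm.trans σa
  have rhs_eq : ∑ i, dsort a i * dsort d i = ∑ i, d i * a ((σd.symm.trans σa) i) := by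
    rw [← Equiv.sum_comp σd (fun i => d i * a ((σd.symm.trans σa) i))]
    refine Finset.sum_congr rfl fun i _ => ?_
    simp [hda, hdd, Equiv.trans_apply, mul_comm]
  -- upper bound: RHS ≤ LHS
  have h1 : ∑ i, dsort a i * dsort d i ≤ ∑ i, a i * d i := by
    rw [rhs_eq]
    calc ∑ i, d i * a ((σd.symm.trans σa) i) ≤ ∑ i, d i * a i := key _
      _ = ∑ i, a i * d i := Finset.sum_congr rfl fun i _ => mul_comm _ _
  -- lower bound: LHS ≤ RHS via rearrangement inequality
  have h2 : ∑ i, a i * d i ≤ ∑ i, dsort a i * dsort d i := by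
    have lhs_eq : ∑ i, a i * d i = ∑ i, dsort a i * dsort d ((σa.trans σd.symm) i) := by
      rw [← Equiv.sum_comp σa (fun i => a i * d i)]
      refine Finset.sum_congr rfl fun i _ => ?_
      simp [hda, hdd, Equiv.trans_apply]
    rw [lhs_eq]
    exact mono.sum_mul_comp_perm_le_sum_mul
  linarith
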